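/- arXiv:2401.09009 — 2 statements merged into one kernel-verified Lean document; each statement's English description precedes it below -/
import Mathlib

section
/- Let T have a Gamma distribution with shape k(n-1) and rate 1/σ (so 2T/σ is chi-square with 2k(n-1) degrees of freedom), and suppose q < (n+1)/2. Then among estimators δ_c = c/T^{k(q-1)} of Θ(σ) = 1/σ^{k(q-1)}, the constant c minimizing the risk E[(δ_c/Θ(σ) - 1)^2] is c_0 = Γ(k(n-1) + k(1-q)) / Γ(k(n-1) + 2k(1-q)). -/
open Real MeasureTheory Set

lemma aux_integrableOn (σ s : ℝ) (hσ : 0 < σ) (hs : 0 < s) :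
    IntegrableOn (fun t : ℝ => t ^ (s - 1) * Real.exp (-t / σ)) (Ioi 0) := by
  have h := integrableOn_rpow_mul_exp_neg_mul_rpow
    (show (-1 : ℝ) < s - 1 by linarith) (show (0:ℝ) < 1 by norm_num) (show (0:ℝ) < 1/σ by positivity)
  refine h.congr_fun (fun x hx => ?_) measurableSet_Ioi
  dsimp only
  rw [rpow_one, show -(1/σ) * x = -x/σ by ring]

lemma aux_integral (σ s : ℝ) (hσ : 0 < σ) (hs : 0 < s) :
    ∫ t in Ioi (0 : ℝ), t ^ (s - 1) * Real.exp (-t / σ) = σ ^ s * Real.Gamma s := by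
  have h := integral_rpow_mul_exp_neg_mul_Ioi hs (show (0:ℝ) < 1/σ by positivity)
  rw [one_div_one_div] at h
  rw [← h]
  refine setIntegral_congr_fun measurableSet_Ioi (fun x hx => ?_)
  rw [show -(1/σ * x) = -x/σ by ring]

lemma risk_eq (a b σ : ℝ) (ha : 0 < a) (hab : 0 < a + b) (hab2 : 0 < a + 2*b)
    (hσ : 0 < σ) (c : ℝ) :
    (∫ t in Ioi (0 : ℝ),
        (c * t ^ b * σ ^ (-b) - 1) ^ 2 *
          (t ^ (a - 1) * Real.exp (-t / σ) / (σ ^ a * Real.Gamma a)))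
      = c ^ 2 * (Real.Gamma (a + 2*b) / Real.Gamma a)
        - 2 * c * (Real.Gamma (a + b) / Real.Gamma a) + 1 := by
  have hΓa : 0 < Real.Gamma a := Real.Gamma_pos_of_pos ha
  set C2 : ℝ := c ^ 2 * σ ^ (-b) * σ ^ (-b) / (σ ^ a * Real.Gamma a) with hC2
  set C1 : ℝ := -(2 * c) * σ ^ (-b) / (σ ^ a * Real.Gamma a) with hC1
  set C0 : ℝ := 1 / (σ ^ a * Real.Gamma a) with hC0
  have hptw : ∀ t ∈ Ioi (0:ℝ),
      (c * t ^ b * σ ^ (-b) - 1) ^ 2 *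
          (t ^ (a - 1) * Real.exp (-t / σ) / (σ ^ a * Real.Gamma a))
        = C2 * (t ^ (a + 2*b - 1) * Real.exp (-t / σ))
          + C1 * (t ^ (a + b - 1) * Real.exp (-t / σ))
          + C0 * (t ^ (a - 1) * Real.exp (-t / σ)) := by
    intro t ht
    have ht0 : (0:ℝ) < t := ht
    have e2 : t ^ (a + 2*b - 1) = t ^ b * t ^ b * t ^ (a - 1) := by
      rw [← rpow_add ht0, ← rpow_add ht0]; ring_nf
    have e1 : t ^ (a + b - 1) = t ^ b * t ^ (a - 1) := by
      rw [← rpow_add ht0]; ring_nf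
    rw [e2, e1, hC2, hC1, hC0]; ring
  rw [setIntegral_congr_fun measurableSet_Ioi hptw]
  have i2 := aux_integrableOn σ (a + 2*b) hσ hab2
  have i1 := aux_integrableOn σ (a + b) hσ hab
  have i0 := aux_integrableOn σ a hσ ha
  have hI12 : IntegrableOn (fun x : ℝ => C2 * (x ^ (a + 2*b - 1) * Real.exp (-x/σ))
      + C1 * (x ^ (a + b - 1) * Real.exp (-x/σ))) (Ioi 0) :=
    (i2.const_mul C2).add (i1.const_mul C1)
  rw [integral_add hI12 (i0.const_mul C0)]
  rw [integral_add (i2.const_mul C2) (i1.const_mul C1),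
    integral_const_mul, integral_const_mul, integral_const_mul,
    aux_integral σ (a + 2*b) hσ hab2, aux_integral σ (a + b) hσ hab,
    aux_integral σ a hσ ha, hC2, hC1, hC0]
  have hσa : (0:ℝ) < σ ^ a := rpow_pos_of_pos hσ a
  have hσb : (0:ℝ) < σ ^ (-b) := rpow_pos_of_pos hσ (-b)
  have h2 : σ ^ (-b) * σ ^ (-b) * σ ^ (a + 2*b) = σ ^ a := by
    rw [← rpow_add hσ, ← rpow_add hσ]; ring_nf
  have h1 : σ ^ (-b) * σ ^ (a + b) = σ ^ a := by
    rw [← rpow_add hσ]; ring_nf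
  field_simp
  have h2' : σ ^ (-b) * σ ^ (-b) * σ ^ (a + b*2) = σ ^ a := by
    rw [show a + b*2 = a + 2*b by ring]; exact h2
  linear_combination (c^2 * Real.Gamma (a + b*2)) * h2'
    - (2*c*Real.Gamma (a + b)) * h1

/-- Among affine equivariant estimators `δ_c = c / T^{k(q-1)}` of `Θ(σ) = 1/σ^{k(q-1)}`,
the constant `c₀ = Γ(k(n-1)+k(1-q)) / Γ(k(n-1)+2k(1-q))` minimizes the quadratic risk,
where `T` is Gamma distributed with shape `k(n-1)` and rate `1/σ`. -/
theorem baee_minimizes_risk (k n : ℕ) (hk : 1 ≤ k) (hn : 2 ≤ n) (q σ : ℝ)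
    (hq0 : 0 < q) (hq1 : q ≠ 1) (hq : q < ((n : ℝ) + 1) / 2) (hσ : 0 < σ) :
    ∀ c : ℝ,
      (∫ t in Ioi (0 : ℝ),
          ((Real.Gamma ((k : ℝ) * ((n : ℝ) - 1) + (k : ℝ) * (1 - q)) /
              Real.Gamma ((k : ℝ) * ((n : ℝ) - 1) + 2 * (k : ℝ) * (1 - q))) *
              t ^ ((k : ℝ) * (1 - q)) * σ ^ ((k : ℝ) * (q - 1)) - 1) ^ 2 *
            (t ^ ((k : ℝ) * ((n : ℝ) - 1) - 1) * Real.exp (-t / σ) /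
              (σ ^ ((k : ℝ) * ((n : ℝ) - 1)) * Real.Gamma ((k : ℝ) * ((n : ℝ) - 1))))) ≤
      (∫ t in Ioi (0 : ℝ),
          (c * t ^ ((k : ℝ) * (1 - q)) * σ ^ ((k : ℝ) * (q - 1)) - 1) ^ 2 *
            (t ^ ((k : ℝ) * ((n : ℝ) - 1) - 1) * Real.exp (-t / σ) /
              (σ ^ ((k : ℝ) * ((n : ℝ) - 1)) * Real.Gamma ((k : ℝ) * ((n : ℝ) - 1))))) := by
  intro c
  have hk1 : (1:ℝ) ≤ (k:ℝ) := by exact_mod_cast hk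
  have hn2 : (2:ℝ) ≤ (n:ℝ) := by exact_mod_cast hn
  set a : ℝ := (k : ℝ) * ((n : ℝ) - 1) with ha_def
  set b : ℝ := (k : ℝ) * (1 - q) with hb_def
  have ha : 0 < a := by
    have : (0:ℝ) < (n:ℝ) - 1 := by linarith
    positivity
  have hab : 0 < a + b := by
    have : a + b = (k:ℝ) * ((n:ℝ) - q) := by rw [ha_def, hb_def]; ring
    rw [this]
    have : q < (n:ℝ) := by linarith
    nlinarith
  have hab2 : 0 < a + 2*b := by
    have : a + 2*b = (k:ℝ) * ((n:ℝ) + 1 - 2*q) := by rw [ha_def, hb_def]; ring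
    rw [this]
    nlinarith
  have hrw1 : (k : ℝ) * (q - 1) = -b := by rw [hb_def]; ring
  have hrw2 : a + 2 * (k : ℝ) * (1 - q) = a + 2*b := by rw [hb_def]; ring
  rw [hrw1, hrw2]
  rw [risk_eq a b σ ha hab hab2 hσ c,
    risk_eq a b σ ha hab hab2 hσ (Real.Gamma (a + b) / Real.Gamma (a + 2*b))]
  have hΓa : 0 < Real.Gamma a := Real.Gamma_pos_of_pos ha
  have hΓ1 : 0 < Real.Gamma (a + b) := Real.Gamma_pos_of_pos hab
  have hΓ2 : 0 < Real.Gamma (a + 2*b) := Real.Gamma_pos_of_pos hab2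
  set c₀ : ℝ := Real.Gamma (a + b) / Real.Gamma (a + 2*b) with hc₀
  clear_value c₀
  have hkey : Real.Gamma (a + 2*b) / Real.Gamma a * c₀ = Real.Gamma (a + b) / Real.Gamma a := by
    rw [hc₀]; field_simp
  have hG2 : 0 < Real.Gamma (a + 2*b) / Real.Gamma a := by positivity
  have expand : (c ^ 2 * (Real.Gamma (a + 2*b) / Real.Gamma a)
        - 2 * c * (Real.Gamma (a + b) / Real.Gamma a) + 1)
      - (c₀ ^ 2 * (Real.Gamma (a + 2*b) / Real.Gamma a)
        - 2 * c₀ * (Real.Gamma (a + b) / Real.Gamma a) + 1)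
      = (Real.Gamma (a + 2*b) / Real.Gamma a) * (c - c₀) ^ 2 := by
    linear_combination (2*c - 2*c₀) * hkey
  linarith [expand, mul_nonneg hG2.le (sq_nonneg (c - c₀))]
end

section
/- Fix d_1 < d_2 real and r > 0, n ≥ 1. The function y ↦ (1 - e^{-n r e^{y - d_2}}) / (1 - e^{-n r e^{y - d_1}}) is increasing on ℝ. Equivalently, for 0 < a < b, the function z ↦ (1 - e^{-a z})/(1 - e^{-b z}) is increasing in z > 0. -/
open Real Set

private lemma key_ineq {s t : ℝ} (hs : 0 < s) (hst : s < t) :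
    t * (Real.exp s - 1) < s * (Real.exp t - 1) := by
  have hmono : StrictMonoOn (fun x : ℝ => (Real.exp x - 1) / x) (Ioi 0) := by
    apply strictMonoOn_of_deriv_pos (convex_Ioi 0)
    · exact ((Real.continuous_exp.sub continuous_const).continuousOn).div
        continuousOn_id (fun x hx => ne_of_gt hx)
    · intro x hx
      rw [interior_Ioi] at hx
      have hx0 : (x : ℝ) ≠ 0 := ne_of_gt hx
      have h1 : HasDerivAt (fun x : ℝ => (Real.exp x - 1) / x)
          ((Real.exp x * x - (Real.exp x - 1) * 1) / x ^ 2) x :=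
        ((Real.hasDerivAt_exp x).sub_const 1).div (hasDerivAt_id x) hx0
      rw [h1.deriv]
      have h2 : -x + 1 < Real.exp (-x) := Real.add_one_lt_exp (by simpa using hx0)
      have h3 := Real.exp_pos x
      have h4 : Real.exp (-x) * Real.exp x = 1 := by
        rw [← Real.exp_add]; simp
      have hnum : 0 < Real.exp x * x - (Real.exp x - 1) * 1 := by nlinarith
      exact div_pos hnum (by positivity)
  have h := hmono (mem_Ioi.mpr hs) (mem_Ioi.mpr (hs.trans hst)) hst
  rw [div_lt_div_iff₀ hs (hs.trans hst)] at h
  nlinarith [h]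

private lemma ratio_mono {a b : ℝ} (ha : 0 < a) (hab : a < b) :
    StrictMonoOn (fun z : ℝ =>
      (1 - Real.exp (-(a * z))) / (1 - Real.exp (-(b * z)))) (Ioi (0 : ℝ)) := by
  have hb : 0 < b := ha.trans hab
  have hden : ∀ z : ℝ, 0 < z → Real.exp (-(b * z)) < 1 := by
    intro z hz
    have : -(b * z) < 0 := by nlinarith
    calc Real.exp (-(b * z)) < Real.exp 0 := Real.exp_lt_exp.mpr this
      _ = 1 := Real.exp_zero
  apply strictMonoOn_of_deriv_pos (convex_Ioi 0)
  · apply ContinuousOn.div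
    · exact (continuous_const.sub (Real.continuous_exp.comp
        ((continuous_const.mul continuous_id).neg))).continuousOn
    · exact (continuous_const.sub (Real.continuous_exp.comp
        ((continuous_const.mul continuous_id).neg))).continuousOn
    · intro z hz
      have := hden z hz
      intro hc
      linarith [sub_eq_zero.mp hc]
  · intro z hz
    rw [interior_Ioi] at hz
    have hz0 : (0:ℝ) < z := hz
    have hDa : HasDerivAt (fun z : ℝ => 1 - Real.exp (-(a * z)))
        (a * Real.exp (-(a * z))) z := by
      have h1 : HasDerivAt (fun z : ℝ => -(a * z)) (-a) z := by
        simpa [Pi.neg_def] using ((hasDerivAt_id z).const_mul a).neg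
      have h2 := (Real.hasDerivAt_exp (-(a * z))).comp z h1
      have h3 := h2.const_sub 1
      exact h3.congr_deriv (by ring)
    have hDb : HasDerivAt (fun z : ℝ => 1 - Real.exp (-(b * z)))
        (b * Real.exp (-(b * z))) z := by
      have h1 : HasDerivAt (fun z : ℝ => -(b * z)) (-b) z := by
        simpa [Pi.neg_def] using ((hasDerivAt_id z).const_mul b).neg
      have h2 := (Real.hasDerivAt_exp (-(b * z))).comp z h1
      have h3 := h2.const_sub 1
      exact h3.congr_deriv (by ring)
    have hdz : (1 : ℝ) - Real.exp (-(b * z)) ≠ 0 := by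
      have := hden z hz
      intro hc; linarith [sub_eq_zero.mp hc]
    have hD : HasDerivAt (fun z : ℝ => (1 - Real.exp (-(a * z))) / (1 - Real.exp (-(b * z)))) _ z :=
      hDa.div hDb hdz
    rw [hD.deriv]
    -- numerator positivity
    have hkey := key_ineq (mul_pos ha hz) (by nlinarith [hz0] : a * z < b * z)
    -- b*z*(exp(a*z)-1) < a*z*(exp(b*z)-1)
    have hkey' : b * (Real.exp (a * z) - 1) < a * (Real.exp (b * z) - 1) := by
      nlinarith [hkey, hz0]
    have hF1 := Real.exp_pos (a * z)
    have hF2 := Real.exp_pos (b * z)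
    have hnum : 0 < a * Real.exp (-(a * z)) * (1 - Real.exp (-(b * z))) -
        (1 - Real.exp (-(a * z))) * (b * Real.exp (-(b * z)))  := by
      rw [Real.exp_neg, Real.exp_neg]
      have heq : a * (Real.exp (a * z))⁻¹ * (1 - (Real.exp (b * z))⁻¹) -
          (1 - (Real.exp (a * z))⁻¹) * (b * (Real.exp (b * z))⁻¹) =
          (a * (Real.exp (b * z) - 1) - b * (Real.exp (a * z) - 1)) /
            (Real.exp (a * z) * Real.exp (b * z)) := by
        field_simp
      rw [heq]
      exact div_pos (by linarith) (by positivity)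
    exact div_pos hnum (by positivity)

/-- MLR key step: for `d₁ < d₂`, the ratio `y ↦ (1-e^{-nr e^{y-d₂}})/(1-e^{-nr e^{y-d₁}})` is
increasing on `ℝ`; equivalently, for `0 < a < b` the map
`z ↦ (1-e^{-az})/(1-e^{-bz})` is increasing on `(0,∞)`. -/
theorem exp_ratio_strictMono (n : ℕ) (hn : 1 ≤ n) (r d₁ d₂ : ℝ) (hr : 0 < r) (hd : d₁ < d₂) :
    StrictMono (fun y : ℝ =>
        (1 - Real.exp (-((n : ℝ) * r * Real.exp (y - d₂)))) /
          (1 - Real.exp (-((n : ℝ) * r * Real.exp (y - d₁))))) ∧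
    ∀ a b : ℝ, 0 < a → a < b →
      StrictMonoOn (fun z : ℝ =>
          (1 - Real.exp (-(a * z))) / (1 - Real.exp (-(b * z)))) (Ioi (0 : ℝ)) := by
  constructor
  · have hn' : (0 : ℝ) < (n : ℝ) := by exact_mod_cast Nat.lt_of_lt_of_le Nat.zero_lt_one hn
    have ha : 0 < (n : ℝ) * r * Real.exp (-d₂) := by positivity
    have hab : (n : ℝ) * r * Real.exp (-d₂) < (n : ℝ) * r * Real.exp (-d₁) :=
      mul_lt_mul_of_pos_left (Real.exp_lt_exp.mpr (neg_lt_neg hd)) (mul_pos hn' hr)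
    have hfun : ∀ (d y : ℝ), (n : ℝ) * r * Real.exp (y - d) =
        (n : ℝ) * r * Real.exp (-d) * Real.exp y := by
      intro d y
      rw [sub_eq_add_neg, Real.exp_add]
      ring
    intro y₁ y₂ hy
    simp only [hfun]
    exact ratio_mono ha hab (mem_Ioi.mpr (Real.exp_pos y₁)) (mem_Ioi.mpr (Real.exp_pos y₂))
      (Real.exp_lt_exp.mpr hy)
  · intro a b ha hab
    exact ratio_mono ha hab
end
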